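/- Let $H$ be a cocommutative bialgebra over a commutative ring $R$. Then for all positive integers $r, s$, the power maps $\lambda_r = \mu^{(r)}\delta^{(r)} : H \to H$ satisfy $\lambda_r \circ \lambda_s = \lambda_{rs}$ and $\lambda_r * \lambda_s = \lambda_{r+s}$, where $*$ denotes the convolution product. -/

import Mathlib

/-! In the convolution algebra `WithConv (H →ₗ[R] H)` the power map `λ_n` is the `n`-th power of
the identity, so `λ_r * λ_s = λ_{r+s}` is `pow_add`. Precomposition with a coalgebra map is
multiplicative for convolution, and for cocommutative `H` every `λ_s` is a coalgebra map; hence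
`λ_r ∘ λ_s = λ_s ^ r = λ_{rs}` in the convolution algebra. -/

open TensorProduct

noncomputable section

variable (R : Type*) [CommRing R] (H : Type*) [Ring H] [Bialgebra R H]

/-- The convolution product `f * g = μ ∘ (f ⊗ g) ∘ δ` on `End_R(H)` for a bialgebra `H`. -/
def conv (f g : H →ₗ[R] H) : H →ₗ[R] H :=
  (LinearMap.mul' R H) ∘ₗ (TensorProduct.map f g) ∘ₗ (Coalgebra.comul (R := R))

/-- The convolution unit `η ∘ ε`. -/
def convUnit : H →ₗ[R] H :=
  (Algebra.linearMap R H) ∘ₗ (Coalgebra.counit (R := R))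

/-- The `r`-th power map `λ_r = Id_H^{*r} = μ^{(r)} ∘ δ^{(r)}`, the `r`-fold convolution
power of the identity map of `H`. -/
def lam : ℕ → (H →ₗ[R] H)
  | 0 => convUnit R H
  | r + 1 => conv R H LinearMap.id (lam r)

open WithConv

section Convolution

variable {R A B C : Type*} [CommSemiring R] [Semiring A] [AddCommMonoid B] [AddCommMonoid C]
  [Module R B] [Module R C] [Coalgebra R B] [Coalgebra R C]

lemma LinearMap.convPow_comp_coalgHom [Algebra R A] (f : WithConv (C →ₗ[R] A)) (h : B →ₗc[R] C)
    (n : ℕ) :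
    (f ^ n).ofConv ∘ₗ h.toLinearMap = (toConv (f.ofConv ∘ₗ h.toLinearMap) ^ n).ofConv := by
  induction n with
  | zero => ext; simp
  | succ n ih => rw [pow_succ, pow_succ, convMul_comp_coalgHom_distrib, ih]

lemma CoalgHom.exists_toLinearMap_eq_convPow [Bialgebra R A] [Coalgebra.IsCocomm R C]
    (f : C →ₗc[R] A) (n : ℕ) :
    ∃ g : C →ₗc[R] A, g.toLinearMap = (toConv f.toLinearMap ^ n).ofConv := by
  induction n with
  | zero => exact ⟨(Bialgebra.unitBialgHom R A).toCoalgHom.comp (Coalgebra.counitCoalgHom R C), rfl⟩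
  | succ n ih =>
    obtain ⟨g, hg⟩ := ih
    -- `g * f = μ ∘ (g ⊗ f) ∘ δ`, and `δ` is a coalgebra map because `C` is cocommutative.
    refine ⟨(Bialgebra.mulCoalgHom R A).comp
      ((Coalgebra.TensorProduct.map g f).comp (Coalgebra.comulCoalgHom R C)), ?_⟩
    rw [pow_succ, ← toConv_ofConv (_ ^ n), ← hg]
    rfl

end Convolution

lemma lam_eq_convPow (n : ℕ) : lam R H n = (toConv LinearMap.id ^ n).ofConv := by
  induction n with
  | zero => rfl
  | succ n ih => rw [pow_succ', lam, ih]; rfl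

theorem power_maps_of_cocommutative_bialgebra
    (hcocomm : (TensorProduct.comm R H H).toLinearMap ∘ₗ (Coalgebra.comul (R := R)) =
      (Coalgebra.comul (R := R) (A := H)))
    (r s : ℕ) :
    (lam R H r) ∘ₗ (lam R H s) = lam R H (r * s) ∧
    conv R H (lam R H r) (lam R H s) = lam R H (r + s) := by
  have : Coalgebra.IsCocomm R H := ⟨hcocomm⟩
  obtain ⟨g, hg⟩ : ∃ g : H →ₗc[R] H, g.toLinearMap = (toConv LinearMap.id ^ s).ofConv :=
    (CoalgHom.id R H).exists_toLinearMap_eq_convPow s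
  simp only [lam_eq_convPow]
  refine ⟨?_, congrArg ofConv (pow_add _ r s).symm⟩
  rw [← hg, LinearMap.convPow_comp_coalgHom, hg, ofConv_toConv, LinearMap.id_comp, toConv_ofConv,
    ← pow_mul']

end
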